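/- Fix a real L < 0. The function f(x) = log(1 + L·(e^x − 1)) is well-defined on (−∞, log(1 − 1/L)), and its derivative f′(x) = L·e^x/(1 + L·(e^x − 1)) is strictly concave on (−∞, log(1 − 1/L)). -/

import Mathlib

/-!
With `c = log (1 - 1/L)` one has `1 + L (eˣ - 1) = (1 - L)(1 - e^(x - c))`, which is positive
for `x < c`, and `f' x = 1 - (1 - e^(x - c))⁻¹`. Since `1 - e^(x - c)` is strictly concave and
positive on `x < c`, and the reciprocal of a positive strictly concave function is strictly
convex, `f'` is strictly concave there.
-/

open Real Set

theorem StrictConcaveOn.strictConvexOn_inv {E : Type*} [AddCommMonoid E] [Module ℝ E]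
    {s : Set E} {f : E → ℝ} (hf : StrictConcaveOn ℝ s f) (hpos : ∀ x ∈ s, 0 < f x) :
    StrictConvexOn ℝ s fun x => (f x)⁻¹ := by
  have hinv : ConvexOn ℝ (Ioi 0) fun t : ℝ => t⁻¹ := by
    simpa using convexOn_zpow (𝕜 := ℝ) (-1)
  refine ⟨hf.1, fun x hx y hy hxy a b ha hb hab => ?_⟩
  have hcomb : 0 < a • f x + b • f y := by
    simp only [smul_eq_mul]
    exact add_pos (mul_pos ha (hpos x hx)) (mul_pos hb (hpos y hy))
  calc (f (a • x + b • y))⁻¹ < (a • f x + b • f y)⁻¹ :=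
        inv_strictAnti₀ hcomb (hf.2 hx hy hxy ha hb hab)
    _ ≤ a • (f x)⁻¹ + b • (f y)⁻¹ := hinv.2 (hpos x hx) (hpos y hy) ha.le hb.le hab

theorem strictConcaveOn_one_sub_exp_sub (c : ℝ) :
    StrictConcaveOn ℝ univ fun x => 1 - exp (x - c) := by
  refine ((strictConvexOn_exp.translate_left (-c)).neg.add_const 1).congr fun x _ => ?_
  simp only [Pi.add_apply, Pi.neg_apply, Function.comp_apply]
  ring_nf

theorem one_add_mul_exp_sub_one_eq {L : ℝ} (hL : L < 0) (x : ℝ) :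
    1 + L * (exp x - 1) = (1 - L) * (1 - exp (x - log (1 - 1 / L))) := by
  have h : 0 < 1 - 1 / L := by linarith [one_div_neg.2 hL]
  rw [exp_sub, exp_log h]
  have hL1 : L - 1 ≠ 0 := by linarith
  field_simp [hL.ne, hL1]
  ring

theorem one_add_mul_exp_sub_one_pos {L x : ℝ} (hL : L < 0) (hx : x < log (1 - 1 / L)) :
    0 < 1 + L * (exp x - 1) := by
  rw [one_add_mul_exp_sub_one_eq hL]
  have : exp (x - log (1 - 1 / L)) < 1 := exp_lt_one_iff.2 (sub_neg.2 hx)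
  apply mul_pos <;> linarith

theorem hasDerivAt_log_one_add_mul_exp_sub_one {L x : ℝ} (hx : 1 + L * (exp x - 1) ≠ 0) :
    HasDerivAt (fun t => log (1 + L * (exp t - 1))) (L * exp x / (1 + L * (exp x - 1))) x := by
  have hD : HasDerivAt (fun t => 1 + L * (exp t - 1)) (L * exp x) x := by
    simpa using (((hasDerivAt_exp x).sub_const 1).const_mul L).const_add 1
  exact hD.log hx

theorem strictConcaveOn_mul_exp_div_one_add_mul_exp_sub_one {L : ℝ} (hL : L < 0) :
    StrictConcaveOn ℝ (Iio (log (1 - 1 / L))) fun x => L * exp x / (1 + L * (exp x - 1)) := by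
  set c := log (1 - 1 / L)
  have hconv : StrictConvexOn ℝ (Iio c) fun x => (1 - exp (x - c))⁻¹ :=
    ((strictConcaveOn_one_sub_exp_sub c).subset (subset_univ _) (convex_Iio c)).strictConvexOn_inv
      fun x hx => sub_pos.2 (exp_lt_one_iff.2 (sub_neg.2 hx))
  refine (hconv.neg.add_const 1).congr fun x hx => ?_
  have hD : 1 + L * (exp x - 1) = (1 - L) * (1 - exp (x - c)) := one_add_mul_exp_sub_one_eq hL x
  have hnum : L * exp x = -(1 - L) * exp (x - c) := by linear_combination hD
  have hu : 1 - exp (x - c) ≠ 0 := (sub_pos.2 (exp_lt_one_iff.2 (sub_neg.2 hx))).ne'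
  have hL' : 1 - L ≠ 0 := by linarith
  simp only [Pi.add_apply, Pi.neg_apply]
  rw [hD, hnum]
  field_simp
  ring

theorem stmt_12 (L : ℝ) (hL : L < 0) :
    (∀ x : ℝ, x < Real.log (1 - 1 / L) → 0 < 1 + L * (Real.exp x - 1)) ∧
    (∀ x ∈ Set.Iio (Real.log (1 - 1 / L)),
      deriv (fun t => Real.log (1 + L * (Real.exp t - 1))) x =
        L * Real.exp x / (1 + L * (Real.exp x - 1))) ∧
    StrictConcaveOn ℝ (Set.Iio (Real.log (1 - 1 / L)))
      (fun x => L * Real.exp x / (1 + L * (Real.exp x - 1))) := by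
  have hpos := fun x (hx : x < Real.log (1 - 1 / L)) => one_add_mul_exp_sub_one_pos hL hx
  exact ⟨hpos, fun x hx => (hasDerivAt_log_one_add_mul_exp_sub_one (hpos x hx).ne').deriv,
    strictConcaveOn_mul_exp_div_one_add_mul_exp_sub_one hL⟩
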